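/- Let a < b and let Φ(r,θ) = (R(r,θ), Θ(r,θ)) be a C¹ map of [a,b] × ℝ to itself commuting with the translation T(r,θ) = (r, θ+2π), preserving Ω = r dr ∧ dθ, mapping each boundary component into itself, and with ∂R/∂r > 0 everywhere. Then the 1-form λ = ((R² − r²)/2) dθ + R(θ − Θ) dR (written in the coordinates (R,θ)) is closed on [a,b] × ℝ. -/

import Mathlib

/-!
In the coordinates `(R, θ)` write `λ = f dθ + g dR`; it is closed iff `∂f/∂R = ∂g/∂θ`, which
here reads `r ∂r/∂R = R ∂Θ/∂θ` (derivatives at fixed `θ`, resp. fixed `R`). The inverse of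
`Ψ(r, θ) = (R, θ)` is differentiable because `DΨ` has determinant `∂R/∂r ≠ 0`, and it gives
`∂r/∂R = 1/(∂R/∂r)` and `∂Θ/∂θ = det DΦ / (∂R/∂r)`. So the identity is `R · det DΦ = r`, which is
exactly area preservation. Continuity of `Ψ⁻¹` comes from compactness of the slabs
`[a, b] × [θ - 1, θ + 1]`.
-/

open Filter Set Real
open scoped Topology

noncomputable section

/-- The strip [a,b] × ℝ, the universal cover of the annulus. -/
def Strip (a b : ℝ) : Set (ℝ × ℝ) := Set.Icc a b ×ˢ (Set.univ : Set ℝ)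

/-- Deck transformation T(r,θ) = (r, θ + 2π). -/
def Tmap (q : ℝ × ℝ) : ℝ × ℝ := (q.1, q.2 + 2 * π)

/-- The 1-form λ = ((R² − r²)/2) dθ + R(θ − Θ) dR written in the coordinates
(R,θ): here q = (R,θ), Ψinv q = (r,θ) is the point of the strip whose image
under Ψ(r,θ)=(R(r,θ),θ) is q, so r = (Ψinv q).1 and Θ = (Φ (Ψinv q)).2. -/
def lamForm (Φ Ψinv : ℝ × ℝ → ℝ × ℝ) (q : ℝ × ℝ) : (ℝ × ℝ) →L[ℝ] ℝ :=
  ((q.1 ^ 2 - ((Ψinv q).1) ^ 2) / 2) • ContinuousLinearMap.snd ℝ ℝ ℝ +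
    (q.1 * (q.2 - (Φ (Ψinv q)).2)) • ContinuousLinearMap.fst ℝ ℝ ℝ

open ContinuousLinearMap

theorem ContinuousOn.of_invOn_of_isCompact {X Y : Type*} [TopologicalSpace X]
    [TopologicalSpace Y] [T2Space Y] {f : X → Y} {g : Y → X} {K : Set X} {L : Set Y}
    (hK : IsCompact K) (hf : ContinuousOn f K) (hg : MapsTo g L K) (hfg : InvOn g f K L) :
    ContinuousOn g L := by
  refine continuousOn_iff_isClosed.2 fun C hC => ⟨f '' (K ∩ C),
    ((hK.inter_right hC).image_of_continuousOn (hf.mono inter_subset_left)).isClosed, ?_⟩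
  ext y
  refine ⟨fun ⟨hyC, hyL⟩ => ⟨⟨g y, ⟨hg hyL, hyC⟩, hfg.2 hyL⟩, hyL⟩, ?_⟩
  rintro ⟨⟨x, ⟨hxK, hxC⟩, rfl⟩, hyL⟩
  exact ⟨by rwa [mem_preimage, hfg.1 hxK], hyL⟩

theorem ContinuousLinearMap.apply_real_prod {M : Type*} [AddCommGroup M] [Module ℝ M]
    [TopologicalSpace M] (L : ℝ × ℝ →L[ℝ] M) (x : ℝ × ℝ) :
    L x = x.1 • L (1, 0) + x.2 • L (0, 1) := by
  rw [← map_smul, ← map_smul, ← map_add]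
  simp

theorem ContinuousLinearMap.det_real_prod (M : ℝ × ℝ →L[ℝ] ℝ × ℝ) :
    M.det = (M (1, 0)).1 * (M (0, 1)).2 - (M (0, 1)).1 * (M (1, 0)).2 := by
  rw [ContinuousLinearMap.det, ← LinearMap.det_toMatrix (Module.Basis.finTwoProd ℝ),
    Matrix.det_fin_two]
  simp [LinearMap.toMatrix_apply]

theorem fderivWithin_smul_snd_add_smul_fst_symm {s : Set (ℝ × ℝ)} {q : ℝ × ℝ}
    {f g : ℝ × ℝ → ℝ} {f' g' : ℝ × ℝ →L[ℝ] ℝ} (hs : UniqueDiffWithinAt ℝ s q)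
    (hf : HasFDerivWithinAt f f' s q) (hg : HasFDerivWithinAt g g' s q)
    (hfg : f' (1, 0) = g' (0, 1)) (v w : ℝ × ℝ) :
    fderivWithin ℝ (fun y => f y • snd ℝ ℝ ℝ + g y • fst ℝ ℝ ℝ) s q v w =
      fderivWithin ℝ (fun y => f y • snd ℝ ℝ ℝ + g y • fst ℝ ℝ ℝ) s q w v := by
  have hω : HasFDerivWithinAt (fun y => f y • snd ℝ ℝ ℝ + g y • fst ℝ ℝ ℝ)
      (f'.smulRight (snd ℝ ℝ ℝ) + g'.smulRight (fst ℝ ℝ ℝ)) s q :=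
    (hf.smul_const (snd ℝ ℝ ℝ)).add (hg.smul_const (fst ℝ ℝ ℝ))
  rw [hω.fderivWithin hs]
  simp only [add_apply, smulRight_apply, smul_apply, coe_fst', coe_snd', smul_eq_mul]
  rw [f'.apply_real_prod v, f'.apply_real_prod w, g'.apply_real_prod v, g'.apply_real_prod w, hfg]
  simp only [smul_eq_mul]
  ring

/-- The coordinate change `Ψ(r, θ) = (R(r, θ), θ)` attached to `Φ = (R, Θ)`. -/
def psiMap (Φ : ℝ × ℝ → ℝ × ℝ) (x : ℝ × ℝ) : ℝ × ℝ := ((Φ x).1, x.2)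

theorem hasFDerivWithinAt_psiMap {Φ : ℝ × ℝ → ℝ × ℝ} {A : ℝ × ℝ →L[ℝ] ℝ × ℝ}
    {s : Set (ℝ × ℝ)} {p : ℝ × ℝ} (hΦ : HasFDerivWithinAt Φ A s p) :
    HasFDerivWithinAt (psiMap Φ) ((fst ℝ ℝ ℝ ∘L A).prod (snd ℝ ℝ ℝ)) s p :=
  hΦ.fst.prodMk hasFDerivWithinAt_snd

theorem det_prod_fst_comp_snd (A : ℝ × ℝ →L[ℝ] ℝ × ℝ) :
    ((fst ℝ ℝ ℝ ∘L A).prod (snd ℝ ℝ ℝ)).det = (A (1, 0)).1 := by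
  simp [det_real_prod]

theorem det_mul_eq_of_prod_fst_comp_snd_comp_eq_id {A B : ℝ × ℝ →L[ℝ] ℝ × ℝ}
    (h : (fst ℝ ℝ ℝ ∘L A).prod (snd ℝ ℝ ℝ) ∘L B = ContinuousLinearMap.id ℝ (ℝ × ℝ)) :
    A.det * (B (1, 0)).1 = (A (B (0, 1))).2 := by
  have hAB : ∀ x, (A (B x)).1 = x.1 ∧ (B x).2 = x.2 := fun x => by
    simpa [Prod.ext_iff] using congrArg (fun L : ℝ × ℝ →L[ℝ] ℝ × ℝ => L x) h
  have hdet : (A ∘L B).det = A.det * B.det := LinearMap.det_comp _ _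
  rw [det_real_prod, det_real_prod B] at hdet
  simp only [comp_apply, (hAB _).1, (hAB _).2] at hdet
  linarith

theorem Strip.uniqueDiffOn {a b : ℝ} (hab : a < b) : UniqueDiffOn ℝ (Strip a b) := by
  refine uniqueDiffOn_convex ((convex_Icc a b).prod convex_univ) ⟨((a + b) / 2, 0), ?_⟩
  rw [Strip, interior_prod_eq, interior_Icc, interior_univ]
  exact ⟨⟨by linarith, by linarith⟩, mem_univ _⟩

theorem continuousOn_of_invOn_psiMap {a b : ℝ} {Φ Ψinv : ℝ × ℝ → ℝ × ℝ}
    (hΦ : ContinuousOn Φ (Strip a b)) (hΨmaps : MapsTo Ψinv (Strip a b) (Strip a b))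
    (hinv : InvOn Ψinv (psiMap Φ) (Strip a b) (Strip a b)) :
    ContinuousOn Ψinv (Strip a b) := by
  intro q hq
  set K := Icc a b ×ˢ Icc (q.2 - 1) (q.2 + 1)
  have hKs : K ⊆ Strip a b := prod_mono subset_rfl (subset_univ _)
  have hKmaps : MapsTo Ψinv K K := fun y hy => by
    refine ⟨(hΨmaps (hKs hy)).1, ?_⟩
    have h2 : (Ψinv y).2 = y.2 := by simpa [psiMap] using congrArg Prod.snd (hinv.2 (hKs hy))
    exact h2 ▸ hy.2
  have hK : ContinuousOn Ψinv K :=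
    .of_invOn_of_isCompact (isCompact_Icc.prod isCompact_Icc)
      ((hΦ.fst.prodMk continuousOn_snd).mono hKs) hKmaps (hinv.mono hKs hKs)
  have hKnhds : K ∈ 𝓝[Strip a b] q := by
    rw [Strip, ← q.eta, nhdsWithin_prod_eq, nhdsWithin_univ]
    exact prod_mem_prod self_mem_nhdsWithin (Icc_mem_nhds (by linarith) (by linarith))
  exact (hK q ⟨hq.1, by constructor <;> linarith⟩).mono_of_mem_nhdsWithin hKnhds

theorem exists_hasFDerivWithinAt_psiInv {s : Set (ℝ × ℝ)} {Φ Ψinv : ℝ × ℝ → ℝ × ℝ}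
    {A : ℝ × ℝ →L[ℝ] ℝ × ℝ} {q : ℝ × ℝ} (hq : q ∈ s) (hΨ : ContinuousWithinAt Ψinv s q)
    (hΨmaps : MapsTo Ψinv s s) (hright : RightInvOn Ψinv (psiMap Φ) s)
    (hΦ : HasFDerivWithinAt Φ A s (Ψinv q)) (hA : (A (1, 0)).1 ≠ 0) :
    ∃ B, HasFDerivWithinAt Ψinv B s q ∧
      (fst ℝ ℝ ℝ ∘L A).prod (snd ℝ ℝ ℝ) ∘L B = ContinuousLinearMap.id ℝ (ℝ × ℝ) := by
  have hdet : ((fst ℝ ℝ ℝ ∘L A).prod (snd ℝ ℝ ℝ)).det ≠ 0 := by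
    rwa [det_prod_fst_comp_snd]
  set E := toContinuousLinearEquivOfDetNeZero _ hdet
  exact ⟨E.symm, .of_local_left_inverse (f' := E) (hΨ.tendsto_nhdsWithin hΨmaps)
    (hasFDerivWithinAt_psiMap hΦ) hq (eventually_nhdsWithin_of_forall hright),
    E.coe_comp_coe_symm⟩

theorem lam_closed_general (a b : ℝ) (hab : a < b) (Φ Ψinv : ℝ × ℝ → ℝ × ℝ)
    (hC1 : ContDiffOn ℝ 1 Φ (Strip a b))
    (harea : ∀ q ∈ Strip a b,
      (Φ q).1 * (fderivWithin ℝ Φ (Strip a b) q).det = q.1)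
    (hmono : ∀ q ∈ Strip a b,
      0 < fderivWithin ℝ (fun p => (Φ p).1) (Strip a b) q (1, 0))
    (hΨmaps : Set.MapsTo Ψinv (Strip a b) (Strip a b))
    (hΨleft : ∀ q ∈ Strip a b, Ψinv ((Φ q).1, q.2) = q)
    (hΨright : ∀ q ∈ Strip a b, ((Φ (Ψinv q)).1, (Ψinv q).2) = q) :
    ∀ q ∈ Strip a b, ∀ v w : ℝ × ℝ,
      fderivWithin ℝ (lamForm Φ Ψinv) (Strip a b) q v w =
      fderivWithin ℝ (lamForm Φ Ψinv) (Strip a b) q w v := by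
  have hs := Strip.uniqueDiffOn hab
  have hΨcont := continuousOn_of_invOn_psiMap hC1.continuousOn hΨmaps ⟨hΨleft, hΨright⟩
  intro q hq
  set p := Ψinv q
  have hp : p ∈ Strip a b := hΨmaps hq
  have hΦ : HasFDerivWithinAt Φ (fderivWithin ℝ Φ (Strip a b) p) (Strip a b) p :=
    (hC1.differentiableOn one_ne_zero p hp).hasFDerivWithinAt
  set A := fderivWithin ℝ Φ (Strip a b) p
  have hRr : (A (1, 0)).1 ≠ 0 := by
    have h := hmono p hp
    rw [hΦ.fst.fderivWithin (hs p hp)] at h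
    exact h.ne'
  obtain ⟨B, hB, hAB⟩ := exists_hasFDerivWithinAt_psiInv hq (hΨcont q hq) hΨmaps hΨright hΦ hRr
  have hpq : (Φ p).1 = q.1 := by simpa using congrArg Prod.fst (hΨright q hq)
  have key : p.1 * (B (1, 0)).1 = q.1 * (A (B (0, 1))).2 := by
    rw [← harea p hp, hpq, mul_assoc, det_mul_eq_of_prod_fst_comp_snd_comp_eq_id hAB]
  have hdθ := ((hasFDerivWithinAt_fst.pow 2).sub (hB.fst.pow 2)).mul_const (2⁻¹ : ℝ)
  have hdR := hasFDerivWithinAt_fst.mul' (hasFDerivWithinAt_snd.sub (hΦ.comp q hB hΨmaps).snd)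
  refine fderivWithin_smul_snd_add_smul_fst_symm (hs q hq) hdθ hdR ?_
  simp only [Nat.add_one_sub_one, pow_one, nsmul_eq_mul, Nat.cast_ofNat, smul_apply, sub_apply,
    coe_fst', smul_eq_mul, mul_one, comp_apply, Function.comp_apply, Pi.sub_apply,
    MulOpposite.op_sub, add_apply, coe_snd', smul_zero, add_zero]
  linear_combination -key

/-- for a C¹ area-preserving map Φ = (R,Θ) of the strip [a,b]×ℝ
commuting with T, preserving the boundary components, with ∂R/∂r > 0, the 1-form
λ = ((R²−r²)/2)dθ + R(θ−Θ)dR (in the coordinates (R,θ)) is closed. -/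
theorem lam_closed (a b : ℝ) (hab : a < b) (Φ Ψinv : ℝ × ℝ → ℝ × ℝ)
    (hC1 : ContDiffOn ℝ 1 Φ (Strip a b))
    (hmaps : Set.MapsTo Φ (Strip a b) (Strip a b))
    (hT : ∀ q ∈ Strip a b, Φ (Tmap q) = Tmap (Φ q))
    (hbdry : ∀ θ : ℝ, (Φ (a, θ)).1 = a ∧ (Φ (b, θ)).1 = b)
    (harea : ∀ q ∈ Strip a b,
      (Φ q).1 * (fderivWithin ℝ Φ (Strip a b) q).det = q.1)
    (hmono : ∀ q ∈ Strip a b,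
      0 < fderivWithin ℝ (fun p => (Φ p).1) (Strip a b) q (1, 0))
    (hΨmaps : Set.MapsTo Ψinv (Strip a b) (Strip a b))
    (hΨleft : ∀ q ∈ Strip a b, Ψinv ((Φ q).1, q.2) = q)
    (hΨright : ∀ q ∈ Strip a b, ((Φ (Ψinv q)).1, (Ψinv q).2) = q) :
    ∀ q ∈ Strip a b, ∀ v w : ℝ × ℝ,
      fderivWithin ℝ (lamForm Φ Ψinv) (Strip a b) q v w =
      fderivWithin ℝ (lamForm Φ Ψinv) (Strip a b) q w v :=
  lam_closed_general a b hab Φ Ψinv hC1 harea hmono hΨmaps hΨleft hΨright
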